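/- arXiv:2601.15999 — 3 statements merged into one kernel-verified Lean document; each statement's English description precedes it below -/
import Mathlib

section
/- Let S be a real N×N symmetric matrix with zero diagonal such that I−S is invertible, and set H := (I−S)⁻¹. Suppose H = U·diag(λ)·Uᵀ where U is orthogonal and λ : Fin N → ℝ satisfies λᵢ ≠ 0 for all i and λᵢ ≠ −λⱼ for all i ≠ j (condition (i)). Let Uₓ be orthogonal and μ : Fin N → ℝ with μⱼ > 0 for all j be such that H·H = Uₓ·diag(μ)·Uₓᵀ. Assume (condition (ii)) that any two sign vectors q, q′ satisfying ∑ⱼ (Uₓ)ᵢⱼ²·qⱼ·μⱼ^(−1/2) = 1 for all i are equal. Then there exists a sign vector q* with ∑ⱼ (Uₓ)ᵢⱼ²·q*ⱼ·μⱼ^(−1/2) = 1 for all i, and for every sign vector q satisfying this system one has I − Uₓ·diag(q ∘ μ^(−1/2))·Uₓᵀ = S. -/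
open Matrix Finset

theorem stmt_0 {N : ℕ} (S H U Ux : Matrix (Fin N) (Fin N) ℝ) (l m : Fin N → ℝ)
    (hSsym : Sᵀ = S) (hShollow : ∀ i, S i i = 0)
    (hInv : IsUnit (1 - S)) (hH : H = (1 - S)⁻¹)
    (hU : Uᵀ * U = 1)
    (hHdecomp : H = U * Matrix.diagonal l * Uᵀ)
    (hl : ∀ i, l i ≠ 0) (hl' : ∀ i j, i ≠ j → l i ≠ -l j)
    (hUx : Uxᵀ * Ux = 1) (hm : ∀ j, 0 < m j)
    (hHH : H * H = Ux * Matrix.diagonal m * Uxᵀ)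
    (hUnique : ∀ q q' : Fin N → ℝ,
      (∀ i, q i = 1 ∨ q i = -1) → (∀ i, q' i = 1 ∨ q' i = -1) →
      (∀ i, ∑ j, (Ux i j) ^ 2 * q j * (Real.sqrt (m j))⁻¹ = 1) →
      (∀ i, ∑ j, (Ux i j) ^ 2 * q' j * (Real.sqrt (m j))⁻¹ = 1) → q = q') :
    (∃ qs : Fin N → ℝ, (∀ i, qs i = 1 ∨ qs i = -1) ∧
      (∀ i, ∑ j, (Ux i j) ^ 2 * qs j * (Real.sqrt (m j))⁻¹ = 1)) ∧
    (∀ q : Fin N → ℝ, (∀ i, q i = 1 ∨ q i = -1) →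
      (∀ i, ∑ j, (Ux i j) ^ 2 * q j * (Real.sqrt (m j))⁻¹ = 1) →
      1 - Ux * Matrix.diagonal (fun j => q j * (Real.sqrt (m j))⁻¹) * Uxᵀ = S) := by
  have hUxUx : Ux * Uxᵀ = 1 := mul_eq_one_comm.mp hUx
  have hUU : U * Uᵀ = 1 := mul_eq_one_comm.mp hU
  set V : Matrix (Fin N) (Fin N) ℝ := Uᵀ * Ux with hV
  have hVtV : Vᵀ * V = 1 := by
    have h1 : Vᵀ * V = Uxᵀ * (U * Uᵀ) * Ux := by
      simp [hV, Matrix.transpose_mul, Matrix.mul_assoc]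
    rw [h1, hUU, Matrix.mul_one, hUx]
  have hUeq : U = Ux * Vᵀ := by
    rw [hV, Matrix.transpose_mul, Matrix.transpose_transpose, ← Matrix.mul_assoc,
      hUxUx, Matrix.one_mul]
  -- H² in terms of U
  have hHsq : U * Matrix.diagonal (fun i => l i * l i) * Uᵀ = Ux * Matrix.diagonal m * Uxᵀ := by
    rw [← hHH, hHdecomp]
    symm
    calc (U * Matrix.diagonal l * Uᵀ) * (U * Matrix.diagonal l * Uᵀ)
        = U * (Matrix.diagonal l * ((Uᵀ * U) * (Matrix.diagonal l * Uᵀ))) := by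
          simp only [Matrix.mul_assoc]
      _ = U * Matrix.diagonal (fun i => l i * l i) * Uᵀ := by
          rw [hU, Matrix.one_mul, ← Matrix.mul_assoc (Matrix.diagonal l),
            Matrix.diagonal_mul_diagonal]
          simp only [Matrix.mul_assoc]
  -- intertwining relation
  have hIntertwine : Matrix.diagonal (fun i => l i * l i) * V = V * Matrix.diagonal m := by
    have h2 : Uᵀ * (U * Matrix.diagonal (fun i => l i * l i) * Uᵀ) * Ux
        = Uᵀ * (Ux * Matrix.diagonal m * Uxᵀ) * Ux := by rw [hHsq]
    calc Matrix.diagonal (fun i => l i * l i) * V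
        = (Uᵀ * U) * Matrix.diagonal (fun i => l i * l i) * (Uᵀ * Ux) := by
          rw [hU, Matrix.one_mul, hV]
      _ = Uᵀ * (U * Matrix.diagonal (fun i => l i * l i) * Uᵀ) * Ux := by
          simp only [Matrix.mul_assoc]
      _ = Uᵀ * (Ux * Matrix.diagonal m * Uxᵀ) * Ux := h2
      _ = (Uᵀ * Ux) * Matrix.diagonal m * (Uxᵀ * Ux) := by
          simp only [Matrix.mul_assoc]
      _ = V * Matrix.diagonal m := by rw [hUx, Matrix.mul_one, hV]
  have hVeig : ∀ i j, V i j ≠ 0 → l i * l i = m j := by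
    intro i j h
    have e := congrFun (congrFun hIntertwine i) j
    simp only [Matrix.diagonal_mul, Matrix.mul_diagonal] at e
    have e2 : (l i * l i) * V i j = m j * V i j := by linear_combination e
    exact mul_right_cancel₀ h e2
  have hsame : ∀ j i i', V i j ≠ 0 → V i' j ≠ 0 → l i = l i' := by
    intro j i i' h h'
    have e1 := hVeig i j h
    have e2 := hVeig i' j h'
    by_cases hii : i = i'
    · rw [hii]
    · have h0 : (l i - l i') * (l i + l i') = 0 := by nlinarith
      rcases mul_eq_zero.mp h0 with h0 | h0
      · linarith
      · exact absurd (by linarith : l i = -l i') (hl' i i' hii)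
  have hcol : ∀ j, ∑ i, V i j * V i j = 1 := by
    intro j
    have e := congrFun (congrFun hVtV j) j
    simpa [Matrix.mul_apply, Matrix.transpose_apply, Matrix.one_apply] using e
  have hex : ∀ j, ∃ i, V i j ≠ 0 := by
    intro j
    by_contra h
    push_neg at h
    have := hcol j
    simp only [h, mul_zero, Finset.sum_const_zero] at this
    exact zero_ne_one this
  set σ : Fin N → ℝ := fun j => ∑ i, V i j * V i j * l i with hσ
  have hsig : ∀ i j, V i j ≠ 0 → σ j = l i := by
    intro i j h
    have hterm : ∀ i', V i' j * V i' j * l i' = V i' j * V i' j * l i := by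
      intro i'
      by_cases h' : V i' j = 0
      · simp [h']
      · rw [hsame j i' i h' h]
    calc σ j = ∑ i', V i' j * V i' j * l i := Finset.sum_congr rfl (fun i' _ => hterm i')
      _ = (∑ i', V i' j * V i' j) * l i := by rw [Finset.sum_mul]
      _ = l i := by rw [hcol j, one_mul]
  have hsigsq : ∀ j, σ j * σ j = m j := by
    intro j
    obtain ⟨i, hi⟩ := hex j
    rw [hsig i j hi]
    exact hVeig i j hi
  have hsigne : ∀ j, σ j ≠ 0 := by
    intro j h
    have := hsigsq j
    rw [h, mul_zero] at this
    exact absurd this.symm (ne_of_gt (hm j))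
  -- pointwise scaling
  have hscale : ∀ i j, l i * V i j = σ j * V i j := by
    intro i j
    by_cases h : V i j = 0
    · rw [h, mul_zero, mul_zero]
    · rw [hsig i j h]
  -- diagonalization of H by Ux
  have hDiag : Vᵀ * (Matrix.diagonal l * V) = Matrix.diagonal σ := by
    ext j k
    rw [Matrix.mul_apply]
    have hterm : ∀ i, Vᵀ j i * (Matrix.diagonal l * V) i k = σ k * (V i j * V i k) := by
      intro i
      rw [Matrix.transpose_apply, Matrix.diagonal_mul]
      rw [show l i * V i k = σ k * V i k from hscale i k]
      ring
    rw [Finset.sum_congr rfl (fun i _ => hterm i), ← Finset.mul_sum]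
    have : ∑ i, V i j * V i k = (Vᵀ * V) j k := by
      rw [Matrix.mul_apply]
      exact Finset.sum_congr rfl (fun i _ => by rw [Matrix.transpose_apply])
    rw [this, hVtV]
    by_cases hjk : j = k
    · subst hjk; simp [Matrix.one_apply, Matrix.diagonal_apply]
    · simp [Matrix.one_apply, Matrix.diagonal_apply, hjk, Ne.symm hjk]
  have hHsig : H = Ux * Matrix.diagonal σ * Uxᵀ := by
    rw [hHdecomp, hUeq]
    have ht : (Ux * Vᵀ)ᵀ = V * Uxᵀ := by
      simp [Matrix.transpose_mul]
    rw [ht, ← hDiag]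
    simp only [Matrix.mul_assoc]
  -- right inverse
  have hmulone : H * (Ux * Matrix.diagonal (fun j => (σ j)⁻¹) * Uxᵀ) = 1 := by
    rw [hHsig]
    calc Ux * Matrix.diagonal σ * Uxᵀ * (Ux * Matrix.diagonal (fun j => (σ j)⁻¹) * Uxᵀ)
        = Ux * (Matrix.diagonal σ * ((Uxᵀ * Ux) * (Matrix.diagonal (fun j => (σ j)⁻¹) * Uxᵀ))) := by
          simp only [Matrix.mul_assoc]
      _ = Ux * (Matrix.diagonal σ * Matrix.diagonal (fun j => (σ j)⁻¹)) * Uxᵀ := by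
          rw [hUx, Matrix.one_mul]; simp only [Matrix.mul_assoc]
      _ = 1 := by
          rw [Matrix.diagonal_mul_diagonal]
          have hone : (fun j => σ j * (σ j)⁻¹) = fun _ => (1:ℝ) := by
            funext j; exact mul_inv_cancel₀ (hsigne j)
          rw [hone, Matrix.diagonal_one, Matrix.mul_one, hUxUx]
  have hSinv : 1 - S = Ux * Matrix.diagonal (fun j => (σ j)⁻¹) * Uxᵀ := by
    have hdet : IsUnit (1 - S).det := (Matrix.isUnit_iff_isUnit_det _).mp hInv
    have h1 : (1 - S)⁻¹⁻¹ = 1 - S := Matrix.nonsing_inv_nonsing_inv _ hdet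
    rw [← h1, ← hH, Matrix.inv_eq_right_inv hmulone]
  -- sign vector
  set ε : Fin N → ℝ := fun j => σ j * (Real.sqrt (m j))⁻¹ with hε
  have hsqrt : ∀ j, Real.sqrt (m j) * Real.sqrt (m j) = m j :=
    fun j => Real.mul_self_sqrt (le_of_lt (hm j))
  have hsqrtne : ∀ j, Real.sqrt (m j) ≠ 0 :=
    fun j => ne_of_gt (Real.sqrt_pos.mpr (hm j))
  have hεsign : ∀ j, ε j = 1 ∨ ε j = -1 := by
    intro j
    have : ε j * ε j = 1 := by
      have : σ j * (Real.sqrt (m j))⁻¹ * (σ j * (Real.sqrt (m j))⁻¹)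
          = (σ j * σ j) * ((Real.sqrt (m j) * Real.sqrt (m j)))⁻¹ := by
        rw [mul_inv]; ring
      rw [hε]
      simp only
      rw [this, hsigsq j, hsqrt j, mul_inv_cancel₀ (ne_of_gt (hm j))]
    exact mul_self_eq_one_iff.mp this
  have hεinv : ∀ j, ε j * (Real.sqrt (m j))⁻¹ = (σ j)⁻¹ := by
    intro j
    have hmne : m j ≠ 0 := ne_of_gt (hm j)
    rw [hε]
    simp only
    rw [mul_assoc, ← mul_inv, hsqrt j, ← hsigsq j, mul_inv, ← mul_assoc,
      mul_inv_cancel₀ (hsigne j), one_mul]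
  -- diagonal entries
  have hdiagEntry : ∀ (w : Fin N → ℝ) i,
      (Ux * Matrix.diagonal w * Uxᵀ) i i = ∑ j, Ux i j ^ 2 * w j := by
    intro w i
    rw [Matrix.mul_apply]
    refine Finset.sum_congr rfl (fun j _ => ?_)
    rw [Matrix.mul_diagonal, Matrix.transpose_apply]
    ring
  have hεsys : ∀ i, ∑ j, (Ux i j) ^ 2 * ε j * (Real.sqrt (m j))⁻¹ = 1 := by
    intro i
    have h1 : (1 - S) i i = 1 := by
      simp [Matrix.sub_apply, Matrix.one_apply, hShollow i]
    have h2 : (Ux * Matrix.diagonal (fun j => (σ j)⁻¹) * Uxᵀ) i i = 1 := by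
      rw [← hSinv]; exact h1
    rw [hdiagEntry] at h2
    calc ∑ j, (Ux i j) ^ 2 * ε j * (Real.sqrt (m j))⁻¹
        = ∑ j, Ux i j ^ 2 * (σ j)⁻¹ := by
          refine Finset.sum_congr rfl (fun j _ => ?_)
          rw [mul_assoc, hεinv j]
      _ = 1 := h2
  refine ⟨⟨ε, hεsign, hεsys⟩, ?_⟩
  intro q hq hqsys
  have hqε : q = ε := hUnique q ε hq hεsign hqsys hεsys
  have : (fun j => q j * (Real.sqrt (m j))⁻¹) = fun j => (σ j)⁻¹ := by
    funext j
    rw [hqε]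
    exact hεinv j
  rw [this, ← hSinv]
  abel
end

section
/- Let Σ be a positive definite real N×N matrix with positive-semidefinite square root Σ^(1/2), V an orthogonal matrix, and L an invertible real N×N matrix. Define Ŝ := I − Σ^(1/2)·V·L⁻¹. Then I−Ŝ is invertible and, with Ĥ := (I−Ŝ)⁻¹, one has Ĥ·Σ·Ĥᵀ = L·Lᵀ. That is, the colored-noise directed parameterization exactly satisfies the covariance-matching constraint. -/
open Matrix
open scoped MatrixOrder

theorem stmt_7 {N : ℕ} (Sg V L : Matrix (Fin N) (Fin N) ℝ)
    (hSg : Sg.PosDef)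
    (hV : Vᵀ * V = 1)
    (hL : IsUnit L)
    (Shat : Matrix (Fin N) (Fin N) ℝ)
    (hShat : Shat = 1 - CFC.sqrt Sg * V * L⁻¹) :
    IsUnit (1 - Shat) ∧
    (1 - Shat)⁻¹ * Sg * ((1 - Shat)⁻¹)ᵀ = L * Lᵀ := by
  set S := CFC.sqrt Sg with hSdef
  have hS2 : S * S = Sg := CFC.sqrt_mul_sqrt_self Sg (Matrix.nonneg_iff_posSemidef.2 hSg.posSemidef)
  have hSsym : Sᵀ = S := by
    have := (Matrix.nonneg_iff_posSemidef.1 (CFC.sqrt_nonneg Sg) : S.PosSemidef).1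
    simpa [Matrix.IsHermitian, conjTranspose_eq_transpose_of_trivial] using this
  have hSgdet : IsUnit Sg.det := (isUnit_iff_isUnit_det Sg).1 hSg.isUnit
  have hSdetU : IsUnit S.det := by
    have : IsUnit (S.det * S.det) := by rw [← det_mul, hS2]; exact hSgdet
    exact isUnit_of_mul_isUnit_left this
  have hSUnit : IsUnit S := (isUnit_iff_isUnit_det S).2 hSdetU
  have hVdetU : IsUnit V.det := by
    have : IsUnit (V.det * Vᵀ.det) := by rw [mul_comm, ← det_mul, hV]; simp
    exact isUnit_of_mul_isUnit_left this
  have hVUnit : IsUnit V := (isUnit_iff_isUnit_det V).2 hVdetU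
  have hVinv : V⁻¹ = Vᵀ := inv_eq_left_inv hV
  have hLdet : IsUnit L.det := (isUnit_iff_isUnit_det L).1 hL
  have hLinvUnit : IsUnit L⁻¹ := (isUnit_nonsing_inv_iff).2 hL
  have h1S : (1 : Matrix (Fin N) (Fin N) ℝ) - Shat = S * V * L⁻¹ := by
    rw [hShat]; abel
  have hUnit : IsUnit (1 - Shat) := by
    rw [h1S]; exact (hSUnit.mul hVUnit).mul hLinvUnit
  refine ⟨hUnit, ?_⟩
  have hInv : (S * V * L⁻¹)⁻¹ = L * Vᵀ * S⁻¹ := by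
    apply inv_eq_left_inv
    calc L * Vᵀ * S⁻¹ * (S * V * L⁻¹)
        = L * Vᵀ * (S⁻¹ * S) * V * L⁻¹ := by noncomm_ring
      _ = 1 := by
          rw [nonsing_inv_mul S hSdetU, mul_one, mul_assoc, mul_assoc, ← mul_assoc Vᵀ,
            hV, one_mul, mul_nonsing_inv L hLdet]
  have hSinvT : S⁻¹ᵀ = S⁻¹ := by rw [transpose_nonsing_inv, hSsym]
  rw [h1S, hInv, transpose_mul, transpose_mul, hSinvT, transpose_transpose, ← hS2]
  calc L * Vᵀ * S⁻¹ * (S * S) * (S⁻¹ * (V * Lᵀ))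
      = L * (Vᵀ * ((S⁻¹ * S) * (S * S⁻¹)) * V) * Lᵀ := by noncomm_ring
    _ = L * Lᵀ := by
        rw [nonsing_inv_mul S hSdetU, mul_nonsing_inv S hSdetU, one_mul, mul_one, hV, mul_one]
end

section
/- Let S be a symmetric real N×N matrix with zero diagonal, S ≠ 0, and I−S invertible, and set M := ((I−S)⁻¹)². Define f(Ŝ) := −2·trace(Ŝ·M) + trace(Ŝ·M·Ŝᵀ). Then there exists a symmetric matrix D with zero diagonal such that the derivative at t = 0 of t ↦ f(S + t·D) is strictly negative. Consequently, the true matrix S is not a stationary point (hence not a local minimizer) of the population signal-matching objective f over symmetric hollow matrices. -/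
open Matrix

theorem stmt_12 {N : ℕ} (S : Matrix (Fin N) (Fin N) ℝ)
    (hSsym : Sᵀ = S) (hShollow : ∀ i, S i i = 0) (hS0 : S ≠ 0)
    (hInv : IsUnit (1 - S))
    (M : Matrix (Fin N) (Fin N) ℝ)
    (hM : M = (1 - S)⁻¹ * (1 - S)⁻¹) :
    ∃ (D : Matrix (Fin N) (Fin N) ℝ) (d : ℝ),
      Dᵀ = D ∧ (∀ i, D i i = 0) ∧
      HasDerivAt
        (fun t : ℝ =>
          -2 * ((S + t • D) * M).trace + ((S + t • D) * M * (S + t • D)ᵀ).trace)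
        d 0 ∧
      d < 0 := by
  classical
  set A : Matrix (Fin N) (Fin N) ℝ := (1 - S)⁻¹ with hAdef
  have hdet : IsUnit (1 - S).det := (Matrix.isUnit_iff_isUnit_det _).mp hInv
  have h1 : (1 - S) * A = 1 := Matrix.mul_nonsing_inv _ hdet
  have h2 : A * (1 - S) = 1 := Matrix.nonsing_inv_mul _ hdet
  have hT : (1 - S)ᵀ = 1 - S := by rw [Matrix.transpose_sub, Matrix.transpose_one, hSsym]
  have hAT : Aᵀ = A := by rw [hAdef, Matrix.transpose_nonsing_inv, hT]
  have hsymA : ∀ i j, A j i = A i j := fun i j => congrFun (congrFun hAT i) j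
  have hcomm : S * A = A * S := by
    have e : A - S * A = A - A * S := by
      have e1 : A * (1 - S) = A - A * S := by rw [mul_sub, mul_one]
      have e2 : (1 - S) * A = A - S * A := by rw [sub_mul, one_mul]
      rw [← e1, ← e2, h1, h2]
    have := sub_right_injective e
    exact this
  have hMS : M * S = S * M := by
    rw [hM, mul_assoc, ← hcomm, ← mul_assoc, ← hcomm, mul_assoc]
  have hMA : M * (1 - S) = A := by rw [hM, mul_assoc, h2, mul_one]
  -- off-diagonal entry of A exists
  have hoff : ∃ p : Fin N × Fin N, p.1 ≠ p.2 ∧ A p.1 p.2 ≠ 0 := by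
    by_contra h
    push_neg at h
    apply hS0
    have hA1 : A = 1 := by
      funext i j
      by_cases hij : i = j
      · subst hij
        have e := congrFun (congrFun h2 i) i
        rw [Matrix.mul_apply] at e
        have e2 : ∑ k, A i k * (1 - S) k i = A i i * (1 - S) i i := by
          apply Finset.sum_eq_single
          · intro k _ hk
            rw [h (i, k) (Ne.symm hk), zero_mul]
          · intro hi; exact absurd (Finset.mem_univ i) hi
        rw [e2] at e
        have h11 : (1 - S) i i = 1 := by
          simp [Matrix.sub_apply, Matrix.one_apply_eq, hShollow i]
        rw [h11, mul_one] at e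
        simpa using e
      · rw [h (i, j) hij]
        simp [Matrix.one_apply_ne hij]
    have : (1 : Matrix (Fin N) (Fin N) ℝ) - S = 1 := by
      have := h1
      rw [hA1, mul_one] at this
      exact this
    have : S = 0 := by
      have := sub_eq_self.mp this
      exact this
    exact this
  set D : Matrix (Fin N) (Fin N) ℝ := A - Matrix.diagonal (fun i => A i i) with hDdef
  have hDT : Dᵀ = D := by
    rw [hDdef, Matrix.transpose_sub, hAT, Matrix.diagonal_transpose]
  have hDhollow : ∀ i, D i i = 0 := by
    intro i
    simp [hDdef, Matrix.sub_apply, Matrix.diagonal_apply_eq]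
  set b : ℝ := -2 * (D * M).trace + (D * M * Sᵀ).trace + (S * M * Dᵀ).trace with hbdef
  refine ⟨D, b, hDT, hDhollow, ?_, ?_⟩
  · -- derivative
    have hfun : (fun t : ℝ =>
          -2 * ((S + t • D) * M).trace + ((S + t • D) * M * (S + t • D)ᵀ).trace)
        = fun t : ℝ => (-2 * (S * M).trace + (S * M * Sᵀ).trace)
          + b * t + (D * M * Dᵀ).trace * t ^ 2 := by
      funext t
      rw [hbdef]
      simp only [Matrix.transpose_add, Matrix.transpose_smul, Matrix.add_mul,
        Matrix.mul_add, Matrix.smul_mul, Matrix.mul_smul, Matrix.trace_add,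
        Matrix.trace_smul, smul_eq_mul, smul_smul]
      ring
    rw [hfun]
    have hpoly : HasDerivAt
        (fun t : ℝ => (-2 * (S * M).trace + (S * M * Sᵀ).trace)
          + b * t + (D * M * Dᵀ).trace * t ^ 2)
        (0 + b * 1 + (D * M * Dᵀ).trace * (2 * (0:ℝ) ^ 1)) 0 := by
      exact ((hasDerivAt_const (0:ℝ) _).add ((hasDerivAt_id (0:ℝ)).const_mul b)).add
        ((hasDerivAt_pow 2 (0:ℝ)).const_mul _)
    simpa using hpoly
  · -- b < 0
    have h3 : (S * M * Dᵀ).trace = (D * M * Sᵀ).trace := by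
      rw [hSsym, hDT, Matrix.trace_mul_cycle]
      congr 1
      rw [mul_assoc, ← hMS, ← mul_assoc]
    have hDA : D * A = D * M - D * M * S := by
      rw [← hMA, mul_sub, mul_one, mul_sub, ← mul_assoc]
    have hb2 : b = -2 * (D * A).trace := by
      rw [hbdef, h3, hSsym, hDA, Matrix.trace_sub]
      ring
    have hterm : ∀ i j : Fin N, D i j * A j i = if i = j then 0 else (A i j) ^ 2 := by
      intro i j
      by_cases hij : i = j
      · subst hij
        rw [hDhollow i, zero_mul, if_pos rfl]
      · rw [if_neg hij, hsymA i j]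
        have : D i j = A i j := by
          simp [hDdef, Matrix.sub_apply, Matrix.diagonal_apply_ne _ hij]
        rw [this]
        ring
    have htr : (D * A).trace = ∑ i, ∑ j, if i = j then 0 else (A i j) ^ 2 := by
      rw [Matrix.trace]
      apply Finset.sum_congr rfl
      intro i _
      rw [Matrix.diag_apply, Matrix.mul_apply]
      exact Finset.sum_congr rfl fun j _ => hterm i j
    have hpos : 0 < (D * A).trace := by
      rw [htr]
      obtain ⟨⟨i0, j0⟩, hne, hA0⟩ := hoff
      apply Finset.sum_pos'
      · intro i _
        apply Finset.sum_nonneg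
        intro j _
        split
        · exact le_refl 0
        · exact sq_nonneg _
      · refine ⟨i0, Finset.mem_univ _, ?_⟩
        apply Finset.sum_pos'
        · intro j _
          split
          · exact le_refl 0
          · exact sq_nonneg _
        · refine ⟨j0, Finset.mem_univ _, ?_⟩
          rw [if_neg hne]
          exact lt_of_le_of_ne (sq_nonneg _) (Ne.symm (pow_ne_zero 2 hA0))
    rw [hb2]
    linarith
end
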